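/- Let p be a prime, n ≥ 1, r ≥ 0, and x = (x_0,…,x_{n−1}) ∈ 𝔽_p^n. Then argmax^{(r)}(x) = Σ_{i=0}^{n−1} i^{(r)} · Σ_{t=0}^{p−1} ( δ_t(x_i) · Π_{0 ≤ j < i} L_t(x_j) · Π_{i < k ≤ n−1} L_{t+1}(x_k) ) in 𝔽_p, where δ_t(z) = 1 − (z − t)^{p−1}, L_t(z) = Σ_{k=0}^{t−1} ( 1 − (z − k)^{p−1} ), and i^{(r)} ∈ {0,…,p−1} ⊆ 𝔽_p is the r-th digit of the base-p expansion of the integer i. -/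

import Mathlib

/-- The maximum of the components of `x`, where elements of `ZMod p` are
compared via their canonical natural-number representatives. -/
def fmax {p n : ℕ} (x : Fin n → ZMod p) : ZMod p :=
  ((Finset.univ.sup fun i => (x i).val : ℕ) : ZMod p)

/-- The least index `i` with `x i = fmax x`, as a natural number. -/
noncomputable def argmaxN {p n : ℕ} (x : Fin n → ZMod p) : ℕ :=
  sInf {i : ℕ | ∃ h : i < n, x ⟨i, h⟩ = fmax x}

/-- The `r`-th digit of the base-`p` expansion of `k`, as an element of `ZMod p`. -/
def digitP (p k r : ℕ) : ZMod p := (((k / p ^ r) % p : ℕ) : ZMod p)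

/-- Polynomial expression of the low-pass function `χ(z < t)`. -/
def Lp (p t : ℕ) (z : ZMod p) : ZMod p :=
  ∑ k ∈ Finset.range t, (1 - (z - (k : ZMod p)) ^ (p - 1))

/-- Polynomial expression of the Kronecker delta `χ(z = t)`. -/
def deltaP (p t : ℕ) (z : ZMod p) : ZMod p := 1 - (z - (t : ZMod p)) ^ (p - 1)

/-!
By Fermat's little theorem `deltaP p t z` is the indicator of `z = t` and `Lp p t z` that of
`z.val < t`. Hence the `t`-th summand attached to position `i` is `1` exactly when `x i = t`,
every earlier entry is `< t` and every later entry is `≤ t`; summing over `t` leaves the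
indicator of "`i` is the first position of a maximal entry", i.e. of `i = argmax x`, so the
outer sum picks out the digit of the argmax.
-/

open Finset

lemma eq_natCast_iff_val_eq {p t : ℕ} [NeZero p] (ht : t < p) (z : ZMod p) : z = t ↔ z.val = t :=
  ⟨fun h => h ▸ ZMod.val_cast_of_lt ht, fun h => h ▸ (ZMod.natCast_zmod_val z).symm⟩

section Indicators

variable {p : ℕ} [Fact p.Prime]

lemma deltaP_eq_ite (t : ℕ) (z : ZMod p) : deltaP p t z = if z = t then 1 else 0 := by
  unfold deltaP
  split_ifs with h
  · rw [h, sub_self, zero_pow (Nat.sub_ne_zero_of_lt (Fact.out : p.Prime).one_lt), sub_zero]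
  · rw [ZMod.pow_card_sub_one_eq_one (sub_ne_zero.mpr h), sub_self]

lemma Lp_eq_ite {t : ℕ} (ht : t ≤ p) (z : ZMod p) : Lp p t z = if z.val < t then 1 else 0 := by
  have hterm : ∀ k ∈ range t, deltaP p k z = if z.val = k then 1 else 0 := fun k hk => by
    simp only [deltaP_eq_ite, eq_natCast_iff_val_eq ((mem_range.mp hk).trans_le ht)]
  change ∑ k ∈ range t, deltaP p k z = _
  simp only [sum_congr rfl hterm, sum_ite_eq, mem_range]

end Indicators

section Argmax

variable {p n : ℕ} (x : Fin n → ZMod p)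

def IsFirstMaxAt (i : Fin n) : Prop :=
  (∀ j < i, (x j).val < (x i).val) ∧ ∀ k, i < k → (x k).val ≤ (x i).val

instance : DecidablePred (IsFirstMaxAt x) := fun i =>
  inferInstanceAs (Decidable ((∀ j < i, _) ∧ ∀ k, i < k → _))

variable [NeZero p]

lemma val_fmax : (fmax x).val = univ.sup fun i => (x i).val :=
  ZMod.val_cast_of_lt <| (Finset.sup_lt_iff (NeZero.pos p)).mpr fun i _ => ZMod.val_lt (x i)

lemma eq_fmax_iff (i : Fin n) : x i = fmax x ↔ ∀ k, (x k).val ≤ (x i).val := by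
  rw [← ZMod.val_injective p |>.eq_iff, val_fmax]
  exact ⟨fun h k => h ▸ le_sup (f := fun i => (x i).val) (mem_univ k),
    fun h => le_antisymm (le_sup (f := fun i => (x i).val) (mem_univ i))
      (Finset.sup_le fun k _ => h k)⟩

lemma exists_eq_fmax [Nonempty (Fin n)] : ∃ i, x i = fmax x := by
  obtain ⟨i, -, hi⟩ := exists_mem_eq_sup univ univ_nonempty fun i => (x i).val
  exact ⟨i, (eq_fmax_iff x i).mpr fun k => hi ▸ le_sup (f := fun i => (x i).val) (mem_univ k)⟩

lemma argmaxN_spec [Nonempty (Fin n)] : ∃ h : argmaxN x < n, x ⟨argmaxN x, h⟩ = fmax x := by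
  obtain ⟨m, hm⟩ := exists_eq_fmax x
  exact Nat.sInf_mem (s := {i | ∃ h : i < n, x ⟨i, h⟩ = fmax x}) ⟨m, m.isLt, hm⟩

lemma argmaxN_eq_iff (i : Fin n) :
    argmaxN x = i ↔ x i = fmax x ∧ ∀ j < i, x j ≠ fmax x := by
  have : Nonempty (Fin n) := ⟨i⟩
  constructor
  · intro h
    obtain ⟨_, himax⟩ := h ▸ argmaxN_spec x
    rw [argmaxN] at h
    exact ⟨himax, fun j hj hjmax =>
      Nat.notMem_of_lt_sInf ((Fin.lt_def.mp hj).trans_eq h.symm) ⟨j.isLt, hjmax⟩⟩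
  · rintro ⟨himax, hfirst⟩
    exact IsLeast.csInf_eq ⟨⟨i.isLt, himax⟩, fun j ⟨hj, hjmax⟩ =>
      not_lt.mp fun hji => hfirst ⟨j, hj⟩ hji hjmax⟩

lemma argmaxN_eq_iff_isFirstMaxAt (i : Fin n) : argmaxN x = i ↔ IsFirstMaxAt x i := by
  simp only [argmaxN_eq_iff, eq_fmax_iff, IsFirstMaxAt, ne_eq, not_forall, not_le]
  constructor
  · rintro ⟨hmax, hfirst⟩
    refine ⟨fun j hj => (hmax j).lt_of_ne fun hji => ?_, fun k _ => hmax k⟩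
    obtain ⟨k, hk⟩ := hfirst j hj
    exact (hk.trans_le (hji ▸ hmax k)).false
  · rintro ⟨hbefore, hafter⟩
    refine ⟨fun k => ?_, fun j hj => ⟨i, hbefore j hj⟩⟩
    rcases lt_trichotomy k i with hk | rfl | hk
    exacts [(hbefore k hk).le, le_rfl, hafter k hk]

end Argmax

lemma sum_deltaP_mul_prod_Lp_eq_ite {p n : ℕ} [Fact p.Prime] (x : Fin n → ZMod p) (i : Fin n) :
    ∑ t ∈ range p, (deltaP p t (x i) * (∏ j ∈ univ.filter fun j => j < i, Lp p t (x j)) *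
        ∏ k ∈ univ.filter fun k => i < k, Lp p (t + 1) (x k)) =
      if IsFirstMaxAt x i then 1 else 0 := by
  have hterm : ∀ t ∈ range p,
      deltaP p t (x i) * (∏ j ∈ univ.filter fun j => j < i, Lp p t (x j)) *
          ∏ k ∈ univ.filter fun k => i < k, Lp p (t + 1) (x k) =
        if (x i).val = t then
          (∏ j ∈ univ.filter fun j => j < i, if (x j).val < t then (1 : ZMod p) else 0) *
            ∏ k ∈ univ.filter fun k => i < k, if (x k).val ≤ t then (1 : ZMod p) else 0
        else 0 := fun t ht => by
    have ht := mem_range.mp ht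
    simp only [deltaP_eq_ite, eq_natCast_iff_val_eq ht, Lp_eq_ite ht.le, Lp_eq_ite ht,
      Nat.lt_succ_iff, ite_mul, one_mul, zero_mul]
  rw [sum_congr rfl hterm, sum_ite_eq, if_pos (mem_range.mpr (ZMod.val_lt _)), prod_boole,
    prod_boole, ite_zero_mul_ite_zero, mul_one]
  simp only [IsFirstMaxAt, mem_filter, mem_univ, true_and]
  congr

theorem argmax_digit_formula (p : ℕ) (hp : p.Prime) (n : ℕ) (hn : 1 ≤ n) (r : ℕ)
    (x : Fin n → ZMod p) :
    digitP p (argmaxN x) r =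
      ∑ i : Fin n, digitP p (i : ℕ) r *
        ∑ t ∈ Finset.range p,
          (deltaP p t (x i) *
            (∏ j ∈ Finset.univ.filter fun j => j < i, Lp p t (x j)) *
            ∏ k ∈ Finset.univ.filter fun k => i < k, Lp p (t + 1) (x k)) := by
  have : Fact p.Prime := ⟨hp⟩
  have : Nonempty (Fin n) := ⟨⟨0, hn⟩⟩
  have hfirst (i : Fin n) : IsFirstMaxAt x i ↔ ⟨argmaxN x, (argmaxN_spec x).1⟩ = i := by
    rw [← argmaxN_eq_iff_isFirstMaxAt, Fin.ext_iff]
  simp only [sum_deltaP_mul_prod_Lp_eq_ite, hfirst, mul_ite, mul_one, mul_zero, sum_ite_eq,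
    mem_univ, if_true]
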